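/- Let p(x,y,t) be a nonzero homogeneous real polynomial with at most 3 distinct monomials whose monomials have no common monomial factor, such that p(x,y,t) = 0 whenever x + y + t = 0. Then p is a nonzero constant multiple of x + y + t. -/

import Mathlib

/-! At a point of the plane `x + y + t = 0` where one variable vanishes and the other two are
`±1`, exactly the monomials containing that variable die, so the monomials free of it cannot be
a single one; since some monomial is free of it, at least two are. Counting pairs
(variable, monomial free of it) among at most three nonconstant monomials then forces every
monomial to be a pure power `X i ^ d`, and vanishing at `(1, -1, 0)`, `(1, 0, -1)`, `(0, 1, -1)`
and `(1, 1, -2)` forces equal coefficients and `d = 1`. -/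

open MvPolynomial Finset

namespace Finsupp

variable {σ : Type*}

theorem forall_exists_mem_apply_eq_zero_of_not_exists_le {S : Finset (σ →₀ ℕ)}
    (h : ¬ ∃ m : σ →₀ ℕ, m ≠ 0 ∧ ∀ s ∈ S, m ≤ s) (i : σ) : ∃ s ∈ S, s i = 0 := by
  by_contra! hS
  exact h ⟨single i 1, single_ne_zero.2 one_ne_zero,
    fun s hs => single_le_iff.2 (Nat.one_le_iff_ne_zero.2 (hS s hs))⟩

theorem eq_single_of_card_support_eq_one {m : σ →₀ ℕ} (hm : #m.support = 1) :
    ∃ i, m = single i m.degree := by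
  obtain ⟨i, -, hi⟩ := card_support_eq_one.1 hm
  exact ⟨i, by rw [hi, degree_single, ← hi]⟩

variable [Fintype σ] [DecidableEq σ]

theorem sum_card_filter_apply_eq_zero_add_sum_card_support (S : Finset (σ →₀ ℕ)) :
    ∑ i, #{m ∈ S | m i = 0} + ∑ m ∈ S, #m.support = Fintype.card σ * #S := by
  have hcompl : ∀ m : σ →₀ ℕ, #{i | m i = 0} + #m.support = Fintype.card σ := fun m => by
    rw [show ({i | m i = 0} : Finset σ) = m.supportᶜ by ext; simp, card_compl_add_card]
  simp only [card_filter _ S]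
  rw [Finset.sum_comm, ← Finset.sum_add_distrib]
  simp only [← card_filter, hcompl, Finset.sum_const, smul_eq_mul, mul_comm]

theorem card_support_eq_one_of_forall_card_filter_apply_eq_zero {S : Finset (σ →₀ ℕ)}
    (h0 : 0 ∉ S) (hS : #S ≤ Fintype.card σ)
    (hZ : ∀ i, Fintype.card σ ≤ #{m ∈ S | m i = 0} + 1) : ∀ m ∈ S, #m.support = 1 := by
  by_contra! hm
  obtain ⟨m₀, hm₀, hm₀_card⟩ := hm
  have hpos : ∀ m ∈ S, 1 ≤ #m.support := fun m hm =>
    card_pos.2 (support_nonempty_iff.2 fun h => h0 (h ▸ hm))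
  have hlt : ∑ _m ∈ S, 1 < ∑ m ∈ S, #m.support :=
    Finset.sum_lt_sum hpos ⟨m₀, hm₀, lt_of_le_of_ne (hpos m₀ hm₀) hm₀_card.symm⟩
  have hZ_sum : ∑ _i : σ, Fintype.card σ ≤ ∑ i, (#{m ∈ S | m i = 0} + 1) :=
    Finset.sum_le_sum fun i _ => hZ i
  have hcount := sum_card_filter_apply_eq_zero_add_sum_card_support S
  simp only [Finset.sum_const, smul_eq_mul, mul_one, Finset.sum_add_distrib, card_univ]
    at hlt hZ_sum
  -- `n * #S ≥ n * (n - 1) + #S + 1` with `#S ≤ n`, where `n = Fintype.card σ`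
  nlinarith

end Finsupp

namespace MvPolynomial

variable {σ R : Type*} [CommSemiring R]

theorem zero_notMem_support_of_eval_zero {p : MvPolynomial σ R} (h : eval 0 p = 0) :
    (0 : σ →₀ ℕ) ∉ p.support := by
  rwa [mem_support_iff, not_not, ← constantCoeff_eq, ← eval_zero']

theorem card_filter_support_apply_eq_zero_ne_one [Nontrivial R] [NoZeroDivisors R]
    {p : MvPolynomial σ R} {v : σ → R} {i : σ} (hvi : v i = 0) (hv : ∀ j ≠ i, v j ≠ 0)
    (hp : eval v p = 0) : #{m ∈ p.support | m i = 0} ≠ 1 := by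
  intro h
  obtain ⟨m, hm⟩ := card_eq_one.1 h
  obtain ⟨hm_supp, hmi⟩ := mem_filter.1 (hm ▸ mem_singleton_self m)
  have hterm_eq_zero : ∀ n ∈ p.support, n i ≠ 0 → coeff n p * ∏ j ∈ n.support, v j ^ n j = 0 :=
    fun n _ hni => by
      rw [prod_eq_zero (Finsupp.mem_support_iff.2 hni) (by rw [hvi, zero_pow hni]), mul_zero]
  have hterm_ne_zero : coeff m p * ∏ j ∈ m.support, v j ^ m j ≠ 0 := by
    refine mul_ne_zero (mem_support_iff.1 hm_supp) (prod_ne_zero_iff.2 fun j hj => pow_ne_zero _ ?_)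
    exact hv j fun hji => Finsupp.mem_support_iff.1 hj (hji ▸ hmi)
  rw [eval_eq, ← sum_filter_of_ne fun n hn hne => not_not.1 fun hni => hne (hterm_eq_zero n hn hni),
    hm, sum_singleton] at hp
  exact hterm_ne_zero hp

theorem eq_sum_monomial_of_support_subset {p : MvPolynomial σ R} {s : Finset (σ →₀ ℕ)}
    (hs : p.support ⊆ s) : p = ∑ m ∈ s, monomial m (coeff m p) := by
  conv_lhs => rw [p.as_sum]
  exact sum_subset hs fun m _ hm => by rw [notMem_support_iff.1 hm, monomial_zero]

theorem IsHomogeneous.degree_of_mem_support {p : MvPolynomial σ R} {d : ℕ}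
    (hp : p.IsHomogeneous d) {m : σ →₀ ℕ} (hm : m ∈ p.support) : m.degree = d :=
  by_contra fun h => mem_support_iff.1 hm (hp.coeff_eq_zero h)

theorem IsHomogeneous.eq_sum_monomial_single [Fintype σ] [DecidableEq σ] {p : MvPolynomial σ R}
    {d : ℕ} (hp : p.IsHomogeneous d) (hd : d ≠ 0) (hpure : ∀ m ∈ p.support, #m.support = 1) :
    p = ∑ i, monomial (Finsupp.single i d) (coeff (Finsupp.single i d) p) := by
  have hsupp : p.support ⊆ univ.image fun i => Finsupp.single i d := fun m hm => by
    obtain ⟨i, hi⟩ := Finsupp.eq_single_of_card_support_eq_one (hpure m hm)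
    exact mem_image.2 ⟨i, mem_univ i, by rw [hi, hp.degree_of_mem_support hm]⟩
  exact (eq_sum_monomial_of_support_subset hsupp).trans
    (sum_image (Finsupp.single_left_injective hd).injOn)

end MvPolynomial

theorem eq_and_eq_and_eq_zero_or_eq_one_of_forall_add_add_eq_zero {a b c : ℝ} {d : ℕ} (hd : d ≠ 0)
    (h : ∀ x y t : ℝ, x + y + t = 0 → a * x ^ d + b * y ^ d + c * t ^ d = 0) :
    b = a ∧ c = a ∧ (a = 0 ∨ d = 1) := by
  have hab := h 1 (-1) 0 (by norm_num)
  have hac := h 1 0 (-1) (by norm_num)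
  have hbc := h 0 1 (-1) (by norm_num)
  simp only [one_pow, zero_pow hd, mul_zero, mul_one, add_zero, zero_add] at hab hac hbc
  rcases Nat.even_or_odd d with hev | hodd
  · simp only [hev.neg_one_pow, mul_one] at hab hac hbc
    exact ⟨by linarith, by linarith, Or.inl (by linarith)⟩
  · simp only [hodd.neg_one_pow, mul_neg_one] at hab hac hbc
    have hb : b = a := by linarith
    have hc : c = a := by linarith
    have h2 := h 1 1 (-2) (by norm_num)
    rw [hb, hc, show (-2 : ℝ) = -1 * 2 by norm_num, mul_pow, hodd.neg_one_pow, one_pow] at h2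
    have : a * (2 - 2 ^ d) = 0 := by linarith
    refine ⟨hb, hc, (mul_eq_zero.1 this).imp_right fun h2d => ?_⟩
    exact pow_right_injective₀ (by norm_num : (0 : ℝ) < 2) (by norm_num)
      (show (2 : ℝ) ^ d = 2 ^ 1 by linarith)

theorem exists_add_add_eq_zero_apply_eq_zero (i : Fin 3) :
    ∃ x y t : ℝ, x + y + t = 0 ∧ ![x, y, t] i = 0 ∧ ∀ j ≠ i, ![x, y, t] j ≠ 0 := by
  fin_cases i
  · exact ⟨0, 1, -1, by norm_num, rfl, by intro j hj; fin_cases j <;> simp_all⟩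
  · exact ⟨1, 0, -1, by norm_num, rfl, by intro j hj; fin_cases j <;> simp_all⟩
  · exact ⟨1, -1, 0, by norm_num, rfl, by intro j hj; fin_cases j <;> simp_all⟩

theorem two_le_card_filter_support_apply_eq_zero {p : MvPolynomial (Fin 3) ℝ}
    (hnocommon : ¬ ∃ m : Fin 3 →₀ ℕ, m ≠ 0 ∧ ∀ s ∈ p.support, m ≤ s)
    (hvan : ∀ x y t : ℝ, x + y + t = 0 → eval ![x, y, t] p = 0) (i : Fin 3) :
    2 ≤ #{m ∈ p.support | m i = 0} := by
  obtain ⟨x, y, t, hxyt, hi, hj⟩ := exists_add_add_eq_zero_apply_eq_zero i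
  obtain ⟨m, hm, hmi⟩ := Finsupp.forall_exists_mem_apply_eq_zero_of_not_exists_le hnocommon i
  have : 0 < #{m ∈ p.support | m i = 0} := card_pos.2 ⟨m, mem_filter.2 ⟨hm, hmi⟩⟩
  have := card_filter_support_apply_eq_zero_ne_one hi hj (hvan x y t hxyt)
  omega

theorem stmt_4 (p : MvPolynomial (Fin 3) ℝ) (hp : p ≠ 0)
    (hhom : ∃ d, p.IsHomogeneous d)
    (hcard : p.support.card ≤ 3)
    (hnocommon : ¬ ∃ m : Fin 3 →₀ ℕ, m ≠ 0 ∧ ∀ s ∈ p.support, m ≤ s)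
    (hvan : ∀ x y t : ℝ, x + y + t = 0 → eval ![x, y, t] p = 0) :
    ∃ c : ℝ, c ≠ 0 ∧ p = C c * (X 0 + X 1 + X 2) := by
  obtain ⟨d, hhom⟩ := hhom
  have h0 : (0 : Fin 3 →₀ ℕ) ∉ p.support :=
    zero_notMem_support_of_eval_zero <| by
      convert hvan 0 0 0 (by norm_num)
      ext i; fin_cases i <;> rfl
  have hd : d ≠ 0 := by
    obtain ⟨m, hm⟩ := support_nonempty.2 hp
    rw [← hhom.degree_of_mem_support hm, Ne, Finsupp.degree_eq_zero_iff]
    exact fun h => h0 (h ▸ hm)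
  set a := fun i => coeff (Finsupp.single i d) p
  have hp_eq : p = ∑ i, monomial (Finsupp.single i d) (a i) :=
    hhom.eq_sum_monomial_single hd <|
      Finsupp.card_support_eq_one_of_forall_card_filter_apply_eq_zero h0 (by simpa using hcard)
        fun i => by simpa using two_le_card_filter_support_apply_eq_zero hnocommon hvan i
  have heval : ∀ x y t, eval ![x, y, t] p = a 0 * x ^ d + a 1 * y ^ d + a 2 * t ^ d := by
    intro x y t
    rw [hp_eq]
    simp [Fin.sum_univ_three, eval_monomial]
  obtain ⟨h1, h2, hd1⟩ := eq_and_eq_and_eq_zero_or_eq_one_of_forall_add_add_eq_zero hd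
    fun x y t hxyt => heval x y t ▸ hvan x y t hxyt
  have ha0 : a 0 ≠ 0 := fun ha0 => hp (by rw [hp_eq, Fin.sum_univ_three, h1, h2, ha0]; simp)
  refine ⟨a 0, ha0, ?_⟩
  rw [hp_eq, Fin.sum_univ_three, h1, h2, hd1.resolve_left ha0]
  simp only [← C_mul_X_eq_monomial, mul_add]
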